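/- Let n and m be positive integers and let λ(i) denote the sum of the base-r digits of i. If λ(n) > λ(m), then S1_C(n, m) = 0 and S2_C(n, m) = 0, where S1_C and S2_C denote the Stirling-Carlitz numbers of the first and second kind respectively. -/

import Mathlib

open scoped Classical
open PowerSeries Finset

noncomputable section

variable (F : Type) [Field F] [Fintype F]

/-- The rational function field `K = 𝔽_r(T)`. -/
abbrev K : Type := RatFunc F

/-- `r`, the cardinality of the finite field of constants. -/
def rr : ℕ := Fintype.card F

/-- The variable `T` of the rational function field. -/
def Tv : K F := RatFunc.X

/-- `[i] = T^{r^i} - T`. -/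
def br (i : ℕ) : K F := Tv F ^ (rr F) ^ i - Tv F

/-- `D_0 = 1`, `D_i = [i] · D_{i-1}^r`. -/
def D : ℕ → K F
  | 0 => 1
  | i + 1 => br F (i + 1) * D i ^ rr F

/-- `L_0 = 1`, `L_i = [i] · L_{i-1}`. -/
def L : ℕ → K F
  | 0 => 1
  | i + 1 => br F (i + 1) * L i

/-- The Carlitz factorial `Π(n) = ∏_j D_j^{c_j}`, where `c_j = n / r^j % r` are the
base-`r` digits of `n` (all digits with index `> n` vanish since `r ≥ 2`). -/
def Cf (n : ℕ) : K F := ∏ j ∈ Finset.range (n + 1), D F j ^ (n / (rr F) ^ j % rr F)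

/-- The Carlitz logarithm `log_C(z) = Σ_{i ≥ 0} (-1)^i z^{r^i} / L_i`: the coefficient of
`z^m` is `(-1)^i / L_i` if `m = r^i` and `0` otherwise (note `i ≤ r^i = m` since `r ≥ 2`). -/
def logC : PowerSeries (K F) :=
  PowerSeries.mk fun m =>
    ∑ i ∈ Finset.range (m + 1), if m = (rr F) ^ i then (-1 : K F) ^ i / L F i else 0

/-- The Carlitz exponential `e_C(z) = Σ_{i ≥ 0} z^{r^i} / D_i`. -/
def eC : PowerSeries (K F) :=
  PowerSeries.mk fun m =>
    ∑ i ∈ Finset.range (m + 1), if m = (rr F) ^ i then 1 / D F i else 0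

/-- The power series `log_C(z)/z`. -/
def logCdivZ : PowerSeries (K F) :=
  PowerSeries.mk fun n => PowerSeries.coeff (R := K F) (n + 1) (logC F)

/-- The power series `e_C(z)/z`. -/
def eCdivZ : PowerSeries (K F) :=
  PowerSeries.mk fun n => PowerSeries.coeff (R := K F) (n + 1) (eC F)

/-- `λ(i)`, the sum of the base-`r` digits of `i`. -/
def lam (i : ℕ) : ℕ := (Nat.digits (rr F) i).sum

/-! If `f` has nonzero coefficients only at powers of `q = p ^ e` in characteristic `p`, then the
nonzero coefficients of `f ^ m` sit at exponents whose base-`q` digit sum is at most that of `m`.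
Indeed the base-`q` digit sum is subadditive, so a bound on the digit sums of the supports of two
series adds up under multiplication; Frobenius gives `f ^ q = Σ aₙ ^ q z ^ (q n)`, which keeps
such a bound; and `f ^ m = (f ^ (m / q)) ^ q * f ^ (m % q)` finishes an induction on `m`. Both
`log_C` and `e_C` are supported on powers of `r`, and the Carlitz factorials are nonzero. -/

namespace Nat

variable {b : ℕ}

theorem sum_digits_eq_mod_add_sum_digits_div (hb : 1 < b) (n : ℕ) :
    (b.digits n).sum = n % b + (b.digits (n / b)).sum := by
  rcases Nat.eq_zero_or_pos n with rfl | hn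
  · simp
  · simp [Nat.digits_def' hb hn]

theorem sum_digits_base_mul (hb : 1 < b) (n : ℕ) : (b.digits (b * n)).sum = (b.digits n).sum := by
  rw [sum_digits_eq_mod_add_sum_digits_div hb, Nat.mul_mod_right,
    Nat.mul_div_cancel_left _ (by omega), zero_add]

theorem sum_digits_base_pow (hb : 1 < b) (i : ℕ) : (b.digits (b ^ i)).sum = 1 := by
  simpa [Nat.digits_of_lt b 1 one_ne_zero hb] using
    congrArg List.sum (Nat.digits_base_pow_mul hb (k := i) one_pos)

theorem sum_digits_add_le (hb : 1 < b) (a c : ℕ) :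
    (b.digits (a + c)).sum ≤ (b.digits a).sum + (b.digits c).sum := by
  induction h : a + c using Nat.strong_induction_on generalizing a c with
  | _ n ih =>
    subst h
    rcases Nat.eq_zero_or_pos (a + c) with hac | hac
    · obtain ⟨rfl, rfl⟩ : a = 0 ∧ c = 0 := by omega
      simp
    have ha := Nat.mod_lt a (by omega : 0 < b)
    have hc := Nat.mod_lt c (by omega : 0 < b)
    have hquot := Nat.div_lt_self hac hb
    rw [sum_digits_eq_mod_add_sum_digits_div hb (a + c), sum_digits_eq_mod_add_sum_digits_div hb a,
      sum_digits_eq_mod_add_sum_digits_div hb c, Nat.add_mod]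
    rw [Nat.add_div (by omega)] at hquot ⊢
    split_ifs at hquot ⊢ with hcarry
    · -- the carry costs `b` in the lowest digit and adds at most `1` above it
      have h_high := ih _ hquot (a / b + c / b) 1 rfl
      have h_low := ih _ (by omega) (a / b) (c / b) rfl
      rw [← pow_zero b, sum_digits_base_pow hb, pow_zero] at h_high
      rw [Nat.mod_eq_sub_mod hcarry, Nat.mod_eq_of_lt (by omega)]
      omega
    · rw [add_zero] at hquot ⊢
      rw [Nat.mod_eq_of_lt (by omega)]
      have := ih _ hquot (a / b) (c / b) rfl
      omega

end Nat

namespace PowerSeries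

variable {R : Type*} [CommRing R]

theorem coeff_pow_expChar_pow (p : ℕ) [ExpChar R p] (e : ℕ) (f : R⟦X⟧) (n : ℕ) :
    coeff n (f ^ p ^ e) = if p ^ e ∣ n then coeff (n / p ^ e) f ^ p ^ e else 0 := by
  have hp : p ≠ 0 := expChar_ne_zero R p
  have hfrob : map (iterateFrobenius R p e) (expand (p ^ e) (pow_ne_zero e hp) f) = f ^ p ^ e :=
    MvPowerSeries.map_iterateFrobenius_expand p hp f e
  rw [← hfrob, coeff_map, coeff_expand, iterateFrobenius_def]
  split_ifs <;> simp [zero_pow (pow_ne_zero e hp)]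

variable {b k l : ℕ} {f g : R⟦X⟧}

def DigitSumBounded (b k : ℕ) (f : R⟦X⟧) : Prop :=
  ∀ n, coeff n f ≠ 0 → (b.digits n).sum ≤ k

theorem digitSumBounded_one_of_supported_on_powers (hb : 1 < b)
    (hf : ∀ n, coeff n f ≠ 0 → ∃ i, n = b ^ i) : DigitSumBounded b 1 f := by
  intro n hn
  obtain ⟨i, rfl⟩ := hf n hn
  exact (Nat.sum_digits_base_pow hb i).le

namespace DigitSumBounded

theorem one (b : ℕ) : DigitSumBounded b 0 (1 : R⟦X⟧) := by
  intro n hn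
  rw [coeff_one] at hn
  simp [show n = 0 by by_contra h; exact hn (if_neg h)]

theorem mul (hb : 1 < b) (hf : DigitSumBounded b k f) (hg : DigitSumBounded b l g) :
    DigitSumBounded b (k + l) (f * g) := by
  intro n hn
  rw [coeff_mul] at hn
  obtain ⟨⟨i, j⟩, hij, hterm⟩ := Finset.exists_ne_zero_of_sum_ne_zero hn
  rw [Finset.HasAntidiagonal.mem_antidiagonal] at hij
  subst hij
  exact (Nat.sum_digits_add_le hb i j).trans
    (add_le_add (hf i (left_ne_zero_of_mul hterm)) (hg j (right_ne_zero_of_mul hterm)))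

theorem pow (hb : 1 < b) (hf : DigitSumBounded b k f) (j : ℕ) :
    DigitSumBounded b (j * k) (f ^ j) := by
  induction j with
  | zero => simpa using one b
  | succ j ih => simpa [pow_succ, add_mul] using ih.mul hb hf

theorem pow_expChar_pow {p e : ℕ} [ExpChar R p] (hb : 1 < p ^ e)
    (hf : DigitSumBounded (p ^ e) k f) : DigitSumBounded (p ^ e) k (f ^ p ^ e) := by
  intro n hn
  rw [coeff_pow_expChar_pow] at hn
  split_ifs at hn with hdvd
  · obtain ⟨n, rfl⟩ := hdvd
    rw [Nat.sum_digits_base_mul hb]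
    rw [Nat.mul_div_cancel_left _ (by omega)] at hn
    exact hf n (ne_zero_pow (pow_ne_zero e (expChar_ne_zero R p)) hn)
  · exact absurd rfl hn

theorem pow_sum_digits {p e : ℕ} [ExpChar R p] (hb : 1 < p ^ e)
    (hf : DigitSumBounded (p ^ e) 1 f) (m : ℕ) :
    DigitSumBounded (p ^ e) ((p ^ e).digits m).sum (f ^ m) := by
  induction m using Nat.strong_induction_on with
  | _ m ih =>
    rcases Nat.eq_zero_or_pos m with rfl | hm
    · simpa using one (R := R) (p ^ e)
    have hsplit : f ^ m = (f ^ (m / p ^ e)) ^ p ^ e * f ^ (m % p ^ e) := by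
      rw [← pow_mul, ← pow_add, mul_comm, Nat.div_add_mod]
    rw [hsplit, Nat.sum_digits_eq_mod_add_sum_digits_div hb, add_comm]
    simpa using ((ih _ (Nat.div_lt_self hm hb)).pow_expChar_pow hb).mul hb (hf.pow hb (m % p ^ e))

end DigitSumBounded

theorem coeff_pow_eq_zero_of_sum_digits_lt {p e : ℕ} [ExpChar R p] (hb : 1 < p ^ e)
    (hf : ∀ n, coeff n f ≠ 0 → ∃ i, n = (p ^ e) ^ i) {m n : ℕ}
    (h : ((p ^ e).digits m).sum < ((p ^ e).digits n).sum) : coeff n (f ^ m) = 0 := by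
  by_contra hn
  exact (((digitSumBounded_one_of_supported_on_powers hb hf).pow_sum_digits hb m) n hn).not_gt h

end PowerSeries

theorem one_lt_rr : 1 < rr F := Fintype.one_lt_card

theorem br_ne_zero {i : ℕ} (hi : i ≠ 0) : br F i ≠ 0 := by
  have hbr : br F i = algebraMap (Polynomial F) (K F) (Polynomial.X ^ rr F ^ i - Polynomial.X) := by
    simp [br, Tv]
  rw [hbr, map_ne_zero_iff _ (RatFunc.algebraMap_injective F)]
  exact FiniteField.X_pow_card_pow_sub_X_ne_zero F hi (one_lt_rr F)

theorem D_ne_zero : ∀ i, D F i ≠ 0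
  | 0 => one_ne_zero
  | i + 1 => mul_ne_zero (br_ne_zero F i.succ_ne_zero) (pow_ne_zero _ (D_ne_zero i))

theorem Cf_ne_zero (n : ℕ) : Cf F n ≠ 0 :=
  Finset.prod_ne_zero_iff.mpr fun j _ => pow_ne_zero _ (D_ne_zero F j)

theorem exists_eq_pow_of_sum_ite_ne_zero {M : Type*} [AddCommMonoid M] {s : Finset ℕ}
    {k r : ℕ} {c : ℕ → M} (h : ∑ i ∈ s, (if k = r ^ i then c i else 0) ≠ 0) :
    ∃ i, k = r ^ i := by
  obtain ⟨i, -, hi⟩ := Finset.exists_ne_zero_of_sum_ne_zero h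
  exact ⟨i, by_contra fun hk => hi (if_neg hk)⟩

theorem exists_eq_rr_pow_of_coeff_logC_ne_zero (k : ℕ) (h : coeff k (logC F) ≠ 0) :
    ∃ i, k = rr F ^ i := by
  rw [logC, coeff_mk] at h
  exact exists_eq_pow_of_sum_ite_ne_zero h

theorem exists_eq_rr_pow_of_coeff_eC_ne_zero (k : ℕ) (h : coeff k (eC F) ≠ 0) :
    ∃ i, k = rr F ^ i := by
  rw [eC, coeff_mk] at h
  exact exists_eq_pow_of_sum_ite_ne_zero h

theorem coeff_pow_eq_zero_of_lam_lt {f : (K F)⟦X⟧} (hf : ∀ k, coeff k f ≠ 0 → ∃ i, k = rr F ^ i)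
    {m n : ℕ} (h : lam F m < lam F n) : coeff n (f ^ m) = 0 := by
  obtain ⟨p, hchar, e, hp, hcard⟩ := FiniteField.card' F
  have : ExpChar F p := ExpChar.prime hp
  have hrr : rr F = p ^ (e : ℕ) := hcard
  rw [lam, lam, hrr] at h
  rw [hrr] at hf
  exact PowerSeries.coeff_pow_eq_zero_of_sum_digits_lt (hrr ▸ one_lt_rr F) hf h

theorem stirlingCarlitz_eq_zero_of_digitSum_lt
    (S1C S2C : ℕ → ℕ → K F)
    (hS1C : ∀ n k : ℕ,
      PowerSeries.coeff (R := K F) n (logC F ^ k) / Cf F k = S1C n k / Cf F n)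
    (hS2C : ∀ n k : ℕ,
      PowerSeries.coeff (R := K F) n (eC F ^ k) / Cf F k = S2C n k / Cf F n)
    (n m : ℕ) (hlam : lam F m < lam F n) :
    S1C n m = 0 ∧ S2C n m = 0 := by
  have h1 := hS1C n m
  have h2 := hS2C n m
  rw [coeff_pow_eq_zero_of_lam_lt F (exists_eq_rr_pow_of_coeff_logC_ne_zero F) hlam, zero_div,
    eq_comm, div_eq_zero_iff] at h1
  rw [coeff_pow_eq_zero_of_lam_lt F (exists_eq_rr_pow_of_coeff_eC_ne_zero F) hlam, zero_div,
    eq_comm, div_eq_zero_iff] at h2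
  exact ⟨h1.resolve_right (Cf_ne_zero F n), h2.resolve_right (Cf_ne_zero F n)⟩
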